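/- Suppose h : ℝ → ℝ is integrable on (a,b), c ∈ ℝ is a constant with A(x)·h(x) = c for a.e. x ∈ (a,b), and the function w(x) = ∫_a^x h(s) ds satisfies w(b) = 1. Then c = β and w(x) = β ∫_a^x 1/A(s) ds for every x ∈ [a,b]. -/

import Mathlib

/-!
On `(a, b)` the relation `A h = c` forces `h = c / A` almost everywhere, so `w(x) = c ∫_a^x 1/A`;
evaluating at `b` gives `c ∫_a^b 1/A = 1`, i.e. `c = β`.
-/

open MeasureTheory Set

theorem ae_eq_const_mul_inv_of_mul_eq {α K : Type*} [MeasurableSpace α] [Field K]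
    {μ : Measure α} {A h : α → K} {c : K} (hA : ∀ᵐ x ∂μ, A x ≠ 0)
    (hc : ∀ᵐ x ∂μ, A x * h x = c) :
    h =ᵐ[μ] fun x => c * (1 / A x) := by
  filter_upwards [hA, hc] with x hAx hcx
  rw [← hcx]
  field_simp

theorem intervalIntegral.integral_congr_of_ae_eq_restrict_Ioo {E : Type*} [NormedAddCommGroup E]
    [NormedSpace ℝ E] {a b x : ℝ} {f g : ℝ → E} (hfg : f =ᵐ[volume.restrict (Ioo a b)] g)
    (hx : x ∈ Icc a b) :
    ∫ s in a..x, f s = ∫ s in a..x, g s := by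
  rw [Measure.restrict_congr_set Ioo_ae_eq_Ioc] at hfg
  have hfg_x : f =ᵐ[volume.restrict (Ioc a x)] g :=
    ae_restrict_of_ae_restrict_of_subset (Ioc_subset_Ioc_right hx.2) hfg
  rw [intervalIntegral.integral_of_le hx.1, intervalIntegral.integral_of_le hx.1,
    MeasureTheory.integral_congr_ae hfg_x]

theorem stmt_2_general (a b : ℝ) (hab : a < b) (A : ℝ → ℝ)
    (hApos : ∀ᵐ x ∂(volume.restrict (Set.Ioo a b)), 0 < A x)
    (β : ℝ) (hβ : β = (∫ s in a..b, 1 / A s)⁻¹)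
    (h : ℝ → ℝ)
    (c : ℝ) (hc : ∀ᵐ x ∂(volume.restrict (Set.Ioo a b)), A x * h x = c)
    (w : ℝ → ℝ) (hw : ∀ x, w x = ∫ s in a..x, h s)
    (hwb : w b = 1) :
    c = β ∧ ∀ x ∈ Set.Icc a b, w x = β * ∫ s in a..x, 1 / A s := by
  have hh : h =ᵐ[volume.restrict (Ioo a b)] fun s => c * (1 / A s) :=
    ae_eq_const_mul_inv_of_mul_eq (hApos.mono fun _ hx => hx.ne') hc
  have hw_eq : ∀ x ∈ Icc a b, w x = c * ∫ s in a..x, 1 / A s := fun x hx => by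
    rw [hw, intervalIntegral.integral_congr_of_ae_eq_restrict_Ioo hh hx,
      intervalIntegral.integral_const_mul]
  have hcβ : c = β := by
    rw [hβ]
    refine eq_inv_of_mul_eq_one_left ?_
    rw [← hw_eq b (right_mem_Icc.mpr hab.le), hwb]
  exact ⟨hcβ, fun x hx => hcβ ▸ hw_eq x hx⟩

/-- Any solution of `A w' = c` (in the integrated sense `w(x) = ∫_a^x h`
with `A h = c` a.e.) with `w(b) = 1` is given by the harmonic-mean formula:
`c = β` and `w(x) = β ∫_a^x 1/A` on `[a,b]`. -/
theorem stmt_2 (a b : ℝ) (hab : a < b) (A : ℝ → ℝ) (hAmeas : Measurable A)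
    (hApos : ∀ᵐ x ∂(volume.restrict (Set.Ioo a b)), 0 < A x)
    (hAint : IntegrableOn (fun s => 1 / A s) (Set.Ioo a b))
    (β : ℝ) (hβ : β = (∫ s in a..b, 1 / A s)⁻¹)
    (h : ℝ → ℝ) (hhint : IntegrableOn h (Set.Ioo a b))
    (c : ℝ) (hc : ∀ᵐ x ∂(volume.restrict (Set.Ioo a b)), A x * h x = c)
    (w : ℝ → ℝ) (hw : ∀ x, w x = ∫ s in a..x, h s)
    (hwb : w b = 1) :
    c = β ∧ ∀ x ∈ Set.Icc a b, w x = β * ∫ s in a..x, 1 / A s :=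
  stmt_2_general a b hab A hApos β hβ h c hc w hw hwb
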